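/- Region growing with a connectivity lower bound (unit costs): in the subdivided LP setup, assume additionally that every edge has unit cost (c_e = 1 for all e), let γ > 1, let s, t ∈ S with ℓ(s,t) ≥ 1, and suppose that for every A ⊆ S with s ∈ A and t ∉ A the number of edges of E(S) with exactly one endpoint in A is at least γ(k−1) (i.e., every s–t cut internal to S has at least γ(k−1) edges). Then there exists ρ₁ ∈ [0,1) such that both |∂(ρ₁)| ≤ (2γ/(√γ−1)²) · Vol(ρ₁) · ln( e·V^x(S)/Vol(ρ₁) ) · ln ln( e(r+1) ) and |∂(ρ₁)| ≤ (2γ/(√γ−1)²) · cVol(ρ₁) · ln( e·V^x(S)/cVol(ρ₁) ) · ln ln( e(r+1) ), where the balls are grown around z = s. -/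

import Mathlib

/-!
Grow the ball around `s` from radius `0` to `1`. The boundary only changes at the finitely many
distances `ℓ(s, v)`; in between, `Vol` grows and `cVol` shrinks at the rate `|∂ ∩ F|`, and at the
breakpoints they can only jump in the same directions. Hence the potential
`Ψ = ln ln (e V^x(S) / cVol) - ln ln (e V^x(S) / Vol)` never decreases, and it increases at rate at
least `|∂ ∩ F| / (w ln (e V^x(S) / w))`, `w = min (Vol, cVol)`. As both volumes lie in
`[β, V^x(S)] ⊆ [β, (r + 1) β]`, the total increase of `Ψ` is at most `2 ln ln (e (r + 1))`.

Every radius in `[0, 1)` separates `s` from `t`, so `|∂| ≥ γ (k - 1)`, while an `H`-edge is on the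
boundary only for radii in an interval of length at most `y_e`, so `∫ |∂ ∩ H| ≤ Σ y ≤ k - 1`. By
Markov's inequality, radii of total length at least `1 - 1/√γ` have
`|∂ ∩ H| ≤ √γ (k - 1) ≤ |∂| / √γ`. If both bounds failed at every radius, integrating over these
radii would make `Ψ` increase by more than
`(1 - 1/√γ)² · 2γ / (√γ - 1)² · ln ln (e (r + 1)) = 2 ln ln (e (r + 1))`.
-/

open scoped Classical

namespace SubdividedLP

variable {V : Type*}

/-- The smaller of the two values of `g` at the endpoints of an edge. -/
noncomputable def dmin (g : V → ℝ) : Sym2 V → ℝ :=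
  Sym2.lift ⟨fun a b => min (g a) (g b), fun a b => min_comm _ _⟩

/-- The larger of the two values of `g` at the endpoints of an edge. -/
noncomputable def dmax (g : V → ℝ) : Sym2 V → ℝ :=
  Sym2.lift ⟨fun a b => max (g a) (g b), fun a b => max_comm _ _⟩

/-- The value `ℓ(u,v)` of a symmetric function `ℓ` on an edge `{u,v}` (written in a
symmetrized form so that it is well defined on `Sym2 V`; it equals `ℓ u v` whenever
`ℓ` is symmetric). -/
noncomputable def elen (ℓ : V → V → ℝ) : Sym2 V → ℝ :=
  Sym2.lift ⟨fun a b => (ℓ a b + ℓ b a) / 2, fun a b => by dsimp only; rw [add_comm]⟩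

/-- The ball `B^S(z,ρ)` (w.r.t. the distance function `g = ℓ(z,·)`). -/
noncomputable def ball (g : V → ℝ) (S : Finset V) (ρ : ℝ) : Finset V :=
  S.filter fun v => g v ≤ ρ

/-- The boundary `∂(ρ)`: edges of `G` with both endpoints in `S`, exactly one of which
is in the ball of radius `ρ` (equivalently, `min` of the endpoint distances is `≤ ρ`
and `max` is `> ρ`). -/
noncomputable def bdry [Fintype V] [DecidableEq V] (G : SimpleGraph V) [DecidableRel G.Adj]
    (g : V → ℝ) (S : Finset V) (ρ : ℝ) : Finset (Sym2 V) :=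
  G.edgeFinset.filter fun e => (∀ w ∈ e, w ∈ S) ∧ dmin g e ≤ ρ ∧ ρ < dmax g e

/-- The volume `𝒱^{S,x}(z,ρ)`: `β` plus the contribution `c_e·ℓ(u,v)` of the `F`-edges
inside the ball, plus `c_e·(ρ - ℓ(z,u))` for each `F`-edge crossing the boundary
(`u` being its endpoint inside the ball). -/
noncomputable def vol [Fintype V] [DecidableEq V] (G : SimpleGraph V) [DecidableRel G.Adj]
    (c : Sym2 V → ℝ) (ℓ : V → V → ℝ) (F : Finset (Sym2 V)) (S : Finset V) (z : V)
    (β ρ : ℝ) : ℝ :=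
  β + ∑ e ∈ F.filter (fun e => ∀ w ∈ e, w ∈ ball (ℓ z) S ρ), c e * elen ℓ e
    + ∑ e ∈ bdry G (ℓ z) S ρ ∩ F, c e * (ρ - dmin (ℓ z) e)

/-- The complementary volume `𝒱̄^{S,x}(z,ρ)`. -/
noncomputable def cvol [Fintype V] [DecidableEq V] (G : SimpleGraph V) [DecidableRel G.Adj]
    (c : Sym2 V → ℝ) (ℓ : V → V → ℝ) (F : Finset (Sym2 V)) (S : Finset V) (z : V)
    (β ρ : ℝ) : ℝ :=
  β + ∑ e ∈ F.filter (fun e => ∀ w ∈ e, w ∈ S ∧ w ∉ ball (ℓ z) S ρ), c e * elen ℓ e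
    + ∑ e ∈ bdry G (ℓ z) S ρ ∩ F, c e * (dmax (ℓ z) e - ρ)

/-- `𝒱^x(S) = β + Σ_{e ∈ E(S)} c_e x_e`. -/
noncomputable def Vx [Fintype V] [DecidableEq V] (G : SimpleGraph V) [DecidableRel G.Adj]
    (c x : Sym2 V → ℝ) (S : Finset V) (β : ℝ) : ℝ :=
  β + ∑ e ∈ G.edgeFinset.filter (fun e => ∀ w ∈ e, w ∈ S), c e * x e

/-- `c^q(A)`: the total cost of all but the `q-1` most expensive edges of `A`
(equivalently, the minimum cost of a subset of `A` of size `|A| - (q-1)`);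
it is `0` if `|A| < q`. -/
noncomputable def cq (c : Sym2 V → ℝ) (q : ℕ) (A : Finset (Sym2 V)) : ℝ :=
  if A.card < q then 0
  else sInf ((fun B : Finset (Sym2 V) => ∑ e ∈ B, c e) ''
    {B : Finset (Sym2 V) | B ⊆ A ∧ B.card + (q - 1) = A.card})

noncomputable def logRatio (B u : ℝ) : ℝ := Real.log (Real.exp 1 * B / u)

section logRatio

variable {B u v : ℝ}

theorem logRatio_eq (hB : 0 < B) (hu : 0 < u) : logRatio B u = 1 + Real.log B - Real.log u := by
  rw [logRatio, Real.log_div (by positivity) hu.ne', Real.log_mul (Real.exp_ne_zero 1) hB.ne',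
    Real.log_exp]

theorem one_le_logRatio (hu : 0 < u) (huB : u ≤ B) : 1 ≤ logRatio B u := by
  rw [logRatio_eq (hu.trans_le huB) hu]
  linarith [Real.log_le_log hu huB]

theorem log_logRatio_nonneg (hu : 0 < u) (huB : u ≤ B) : 0 ≤ Real.log (logRatio B u) :=
  Real.log_nonneg (one_le_logRatio hu huB)

theorem log_logRatio_anti (hu : 0 < u) (huv : u ≤ v) (hvB : v ≤ B) :
    Real.log (logRatio B v) ≤ Real.log (logRatio B u) := by
  have hB : 0 < B := hu.trans_le (huv.trans hvB)
  refine Real.log_le_log (zero_lt_one.trans_le (one_le_logRatio (hu.trans_le huv) hvB)) ?_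
  rw [logRatio_eq hB hu, logRatio_eq hB (hu.trans_le huv)]
  linarith [Real.log_le_log hu huv]

theorem mul_logRatio_mono (hu : 0 < u) (huv : u ≤ v) (hvB : v ≤ B) :
    u * logRatio B u ≤ v * logRatio B v := by
  have hv : 0 < v := hu.trans_le huv
  have hB : 0 < B := hv.trans_le hvB
  rw [logRatio_eq hB hu, logRatio_eq hB hv]
  -- `v log v - u log u = (v - u) log v + u log (v / u)` and `log (v / u) ≤ v / u - 1`
  have hlog : Real.log v - Real.log u ≤ v / u - 1 := by
    rw [← Real.log_div hv.ne' hu.ne']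
    exact Real.log_le_sub_one_of_pos (div_pos hv hu)
  have hvB' : Real.log v ≤ Real.log B := Real.log_le_log hv hvB
  have hu' : u * (v / u - 1) = v - u := by field_simp
  nlinarith [mul_le_mul_of_nonneg_left hlog hu.le,
    mul_le_mul_of_nonneg_left hvB' (sub_nonneg.2 huv)]

theorem mul_min_mul_logRatio_lt {C L X u' : ℝ} (hC : 0 ≤ C) (hL : 0 ≤ L) (hu : 0 < u)
    (huB : u ≤ B) (hu' : 0 < u') (hu'B : u' ≤ B)
    (h : X ≤ C * u * logRatio B u * L → C * u' * logRatio B u' * L < X) :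
    C * (min u u' * logRatio B (min u u')) * L < X := by
  have hW : ∀ v, 0 < v → v ≤ B → min u u' ≤ v →
      C * (min u u' * logRatio B (min u u')) * L ≤ C * v * logRatio B v * L := fun v _ hvB hv => by
    rw [mul_assoc C v]
    exact mul_le_mul_of_nonneg_right
      (mul_le_mul_of_nonneg_left (mul_logRatio_mono (lt_min hu hu') hv hvB) hC) hL
  by_contra! hle
  exact (h (hle.trans (hW u hu huB (min_le_left _ _)))).not_ge
    (hle.trans (hW u' hu' hu'B (min_le_right _ _)))

theorem hasDerivAt_log_logRatio (hu : 0 < u) (huB : u ≤ B) :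
    HasDerivAt (fun u => Real.log (logRatio B u)) (-(1 / (u * logRatio B u))) u := by
  have hB : 0 < B := hu.trans_le huB
  have hinner : HasDerivAt (fun u => Real.exp 1 * B / u) (-(Real.exp 1 * B) / u ^ 2) u := by
    simpa [div_eq_mul_inv, neg_div] using (hasDerivAt_inv hu.ne').const_mul (Real.exp 1 * B)
  have hL : logRatio B u ≠ 0 := (zero_lt_one.trans_le (one_le_logRatio hu huB)).ne'
  refine ((hinner.log (by positivity)).log hL).congr_deriv ?_
  rw [show Real.log (Real.exp 1 * B / u) = logRatio B u from rfl]
  field_simp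

theorem log_logRatio_le {β R : ℝ} (hβ : 0 < β) (hβB : β ≤ B) (hBR : B ≤ R * β) :
    Real.log (logRatio B β) ≤ Real.log (Real.log (Real.exp 1 * R)) := by
  refine Real.log_le_log (zero_lt_one.trans_le (one_le_logRatio hβ hβB)) ?_
  refine Real.log_le_log (div_pos (mul_pos (Real.exp_pos 1) (hβ.trans_le hβB)) hβ) ?_
  rw [mul_div_assoc]
  exact mul_le_mul_of_nonneg_left ((div_le_iff₀ hβ).2 hBR) (Real.exp_pos 1).le

end logRatio

noncomputable def potential (B v cv : ℝ) : ℝ :=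
  Real.log (logRatio B cv) - Real.log (logRatio B v)

theorem potential_mono {B v v' cv cv' : ℝ} (hv : 0 < v) (hvv : v ≤ v') (hv'B : v' ≤ B)
    (hcv : 0 < cv') (hcvcv : cv' ≤ cv) (hcvB : cv ≤ B) :
    potential B v cv ≤ potential B v' cv' := by
  unfold potential
  linarith [log_logRatio_anti hv hvv hv'B, log_logRatio_anti hcv hcvcv hcvB]

theorem mul_sub_lt_potential_sub {B K m p q a b : ℝ} (hab : a < b) (hm : 0 ≤ m) (hp : 0 < p)
    (hpB : p + m * (b - a) ≤ B) (hq : 0 < q - m * (b - a)) (hqB : q ≤ B)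
    (hslope : ∀ r ∈ Set.Ico a b, K * (min (p + m * (r - a)) (q - m * (r - a)) *
      logRatio B (min (p + m * (r - a)) (q - m * (r - a)))) < m) :
    K * (b - a) < potential B (p + m * (b - a)) (q - m * (b - a)) - potential B p q := by
  set P : ℝ → ℝ := fun r => p + m * (r - a) with hPdef
  set Q : ℝ → ℝ := fun r => q - m * (r - a) with hQdef
  have hP : ∀ r ∈ Set.Icc a b, 0 < P r ∧ P r ≤ B := fun r hr =>
    ⟨by nlinarith [hr.1], by nlinarith [hr.2]⟩
  have hQ : ∀ r ∈ Set.Icc a b, 0 < Q r ∧ Q r ≤ B := fun r hr =>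
    ⟨by nlinarith [hr.2], by nlinarith [hr.1]⟩
  have hderiv : ∀ r ∈ Set.Icc a b, HasDerivAt (fun r => potential B (P r) (Q r))
      (m / (Q r * logRatio B (Q r)) + m / (P r * logRatio B (P r))) r := by
    intro r hr
    have hPd : HasDerivAt P m r :=
      ((((hasDerivAt_id r).sub_const a).const_mul m).const_add p).congr_deriv (mul_one m)
    have hQd : HasDerivAt Q (-m) r :=
      ((((hasDerivAt_id r).sub_const a).const_mul m).const_sub q).congr_deriv (by ring)
    refine (((hasDerivAt_log_logRatio (hQ r hr).1 (hQ r hr).2).comp r hQd).sub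
      ((hasDerivAt_log_logRatio (hP r hr).1 (hP r hr).2).comp r hPd)).congr_deriv ?_
    ring
  obtain ⟨ξ, hξ, hξslope⟩ := exists_hasDerivAt_eq_slope _ _ hab
    (fun r hr => (hderiv r hr).continuousAt.continuousWithinAt)
    (fun r hr => hderiv r (Set.Ioo_subset_Icc_self hr))
  have hξ' : ξ ∈ Set.Icc a b := Set.Ioo_subset_Icc_self hξ
  have hpos : ∀ u, 0 < u → u ≤ B → 0 < u * logRatio B u := fun u hu huB =>
    mul_pos hu (zero_lt_one.trans_le (one_le_logRatio hu huB))
  have hPterm := div_nonneg hm (hpos _ (hP ξ hξ').1 (hP ξ hξ').2).le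
  have hQterm := div_nonneg hm (hpos _ (hQ ξ hξ').1 (hQ ξ hξ').2).le
  -- one of the two nonnegative terms of the derivative is `m / (w log (eB / w))`, `w = min P Q`
  have hK : K < m / (Q ξ * logRatio B (Q ξ)) + m / (P ξ * logRatio B (P ξ)) := by
    have hlt := hslope ξ ⟨hξ.1.le, hξ.2⟩
    rcases min_choice (P ξ) (Q ξ) with hmin | hmin <;> rw [hmin] at hlt
    · linarith [(lt_div_iff₀ (hpos _ (hP ξ hξ').1 (hP ξ hξ').2)).2 hlt]
    · linarith [(lt_div_iff₀ (hpos _ (hQ ξ hξ').1 (hQ ξ hξ').2)).2 hlt]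
  rw [hξslope, lt_div_iff₀ (sub_pos.2 hab)] at hK
  simpa [hPdef, hQdef] using hK

theorem sum_filter_lt_le_inv {ι : Type*} {s : Finset ι} {Δ h : ι → ℝ} {κ σ : ℝ} (hκ : 0 < κ)
    (hσ : 0 < σ) (hΔ : ∀ i ∈ s, 0 ≤ Δ i) (hh : ∀ i ∈ s, 0 ≤ h i)
    (hH : ∑ i ∈ s, h i * Δ i ≤ κ) :
    ∑ i ∈ s with σ * κ < h i, Δ i ≤ σ⁻¹ := by
  set X := ∑ i ∈ s with σ * κ < h i, Δ i
  have hX : σ * κ * X ≤ κ := calc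
    σ * κ * X = ∑ i ∈ s with σ * κ < h i, σ * κ * Δ i := Finset.mul_sum _ _ _
    _ ≤ ∑ i ∈ s with σ * κ < h i, h i * Δ i := Finset.sum_le_sum fun i hi => by
        obtain ⟨his, hlt⟩ := Finset.mem_filter.1 hi
        exact mul_le_mul_of_nonneg_right hlt.le (hΔ i his)
    _ ≤ ∑ i ∈ s, h i * Δ i := Finset.sum_le_sum_of_subset_of_nonneg (Finset.filter_subset _ _)
        fun i hi _ => mul_nonneg (hh i hi) (hΔ i hi)
    _ ≤ κ := hH
  calc X = (σ * κ)⁻¹ * (σ * κ * X) := by field_simp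
    _ ≤ (σ * κ)⁻¹ * κ := by gcongr
    _ = σ⁻¹ := by field_simp

theorem exists_partition_separating (P : Finset ℝ) :
    ∃ (N : ℕ) (ρ : ℕ → ℝ), ρ 0 = 0 ∧ ρ N = 1 ∧ (∀ i < N, ρ i < ρ (i + 1)) ∧
      (∀ i ≤ N, ρ i ∈ Set.Icc 0 1) ∧ ∀ i < N, ∀ θ ∈ P, θ ≤ ρ i ∨ ρ (i + 1) ≤ θ := by
  set Q := insert 0 (insert 1 (P.filter (· ∈ Set.Icc (0 : ℝ) 1)))
  have hQ : ∀ θ ∈ Q, θ ∈ Set.Icc (0 : ℝ) 1 := by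
    intro θ hθ
    simp only [Q, Finset.mem_insert, Finset.mem_filter] at hθ
    rcases hθ with rfl | rfl | ⟨-, hθ⟩
    · norm_num
    · norm_num
    · exact hθ
  have h0 : (0 : ℝ) ∈ Q := Finset.mem_insert_self _ _
  have h1 : (1 : ℝ) ∈ Q := Finset.mem_insert_of_mem (Finset.mem_insert_self _ _)
  have hn : 0 < Q.card := Finset.card_pos.2 ⟨0, h0⟩
  set e := Q.orderEmbOfFin rfl
  have he : ∀ i, e i ∈ Q := Q.orderEmbOfFin_mem rfl
  refine ⟨Q.card - 1, fun i => e ⟨min i (Q.card - 1), by omega⟩, ?_, ?_, ?_, ?_, ?_⟩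
  · simp only [Nat.zero_min]
    rw [Finset.orderEmbOfFin_zero rfl hn]
    exact le_antisymm (Q.min'_le 0 h0) (hQ _ (Q.min'_mem _)).1
  · simp only [min_self]
    rw [Finset.orderEmbOfFin_last rfl hn]
    exact le_antisymm (hQ _ (Q.max'_mem _)).2 (Q.le_max' 1 h1)
  · intro i hi
    exact e.strictMono (Fin.mk_lt_mk.2 (by omega))
  · exact fun i _ => hQ _ (he _)
  · intro i hi θ hθ
    by_cases hθQ : θ ∈ Set.Icc (0 : ℝ) 1
    · obtain ⟨j, rfl⟩ : θ ∈ Set.range e := by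
        rw [Finset.range_orderEmbOfFin]
        exact Finset.mem_insert_of_mem (Finset.mem_insert_of_mem (Finset.mem_filter.2 ⟨hθ, hθQ⟩))
      rcases le_or_gt (j : ℕ) i with hj | hj
      · exact Or.inl (e.monotone (Fin.mk_le_mk.2 (by omega)))
      · exact Or.inr (e.monotone (Fin.mk_le_mk.2 (by omega)))
    · rw [Set.mem_Icc, not_and_or, not_le, not_le] at hθQ
      rcases hθQ with hθ0 | hθ1
      · exact Or.inl (hθ0.le.trans (hQ _ (he _)).1)
      · exact Or.inr ((hQ _ (he _)).2.trans hθ1.le)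

structure IsVolumeProfile (β B : ℝ) (N : ℕ) (ρ : ℕ → ℝ) (v cv : ℝ → ℝ) (m : ℕ → ℝ) : Prop where
  lt_succ : ∀ i < N, ρ i < ρ (i + 1)
  slope_nonneg : ∀ i < N, 0 ≤ m i
  mem_Icc : ∀ i ≤ N, v (ρ i) ∈ Set.Icc β B ∧ cv (ρ i) ∈ Set.Icc β B
  eq_on_piece : ∀ i < N, ∀ r ∈ Set.Ico (ρ i) (ρ (i + 1)),
    v r = v (ρ i) + m i * (r - ρ i) ∧ cv r = cv (ρ i) - m i * (r - ρ i)
  add_le : ∀ i < N, v (ρ i) + m i * (ρ (i + 1) - ρ i) ≤ v (ρ (i + 1)) ∧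
    cv (ρ (i + 1)) ≤ cv (ρ i) - m i * (ρ (i + 1) - ρ i)

namespace IsVolumeProfile

variable {β B : ℝ} {N : ℕ} {ρ : ℕ → ℝ} {v cv : ℝ → ℝ} {m : ℕ → ℝ}

theorem mem_Icc_of_mem_Ico (hP : IsVolumeProfile β B N ρ v cv m) {i : ℕ} (hi : i < N) {r : ℝ}
    (hr : r ∈ Set.Ico (ρ i) (ρ (i + 1))) : v r ∈ Set.Icc β B ∧ cv r ∈ Set.Icc β B := by
  obtain ⟨hv, hcv⟩ := hP.eq_on_piece i hi r hr
  obtain ⟨hvi, hcvi⟩ := hP.mem_Icc i hi.le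
  obtain ⟨hvi', hcvi'⟩ := hP.mem_Icc (i + 1) hi
  obtain ⟨hjv, hjcv⟩ := hP.add_le i hi
  have hlo := mul_nonneg (hP.slope_nonneg i hi) (sub_nonneg.2 hr.1)
  have hhi := mul_le_mul_of_nonneg_left (sub_le_sub_right hr.2.le (ρ i)) (hP.slope_nonneg i hi)
  rw [hv, hcv]
  exact ⟨⟨by linarith [hvi.1], by linarith [hvi'.2]⟩,
    ⟨by linarith [hcvi'.1], by linarith [hcvi.2]⟩⟩

theorem potential_le_succ (hP : IsVolumeProfile β B N ρ v cv m) (hβ : 0 < β) {i : ℕ}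
    (hi : i < N) :
    potential B (v (ρ i)) (cv (ρ i)) ≤ potential B (v (ρ (i + 1))) (cv (ρ (i + 1))) := by
  obtain ⟨hjv, hjcv⟩ := hP.add_le i hi
  have hstep := mul_nonneg (hP.slope_nonneg i hi) (sub_nonneg.2 (hP.lt_succ i hi).le)
  exact potential_mono (hβ.trans_le (hP.mem_Icc i hi.le).1.1) (by linarith)
    (hP.mem_Icc (i + 1) hi).1.2 (hβ.trans_le (hP.mem_Icc (i + 1) hi).2.1) (by linarith)
    (hP.mem_Icc i hi.le).2.2

theorem mul_sub_lt_potential_succ_sub (hP : IsVolumeProfile β B N ρ v cv m) (hβ : 0 < β)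
    {i : ℕ} (hi : i < N) {K : ℝ}
    (hslope : ∀ r ∈ Set.Ico (ρ i) (ρ (i + 1)),
      K * (min (v r) (cv r) * logRatio B (min (v r) (cv r))) < m i) :
    K * (ρ (i + 1) - ρ i) <
      potential B (v (ρ (i + 1))) (cv (ρ (i + 1))) - potential B (v (ρ i)) (cv (ρ i)) := by
  obtain ⟨hjv, hjcv⟩ := hP.add_le i hi
  obtain ⟨hvi, hcvi⟩ := hP.mem_Icc i hi.le
  obtain ⟨hvi', hcvi'⟩ := hP.mem_Icc (i + 1) hi
  have hpiece := mul_sub_lt_potential_sub (hP.lt_succ i hi) (hP.slope_nonneg i hi)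
    (hβ.trans_le hvi.1) (hjv.trans hvi'.2) (hβ.trans_le (hcvi'.1.trans hjcv)) hcvi.2
    fun r hr => by
      obtain ⟨hv, hcv⟩ := hP.eq_on_piece i hi r hr
      rw [← hv, ← hcv]
      exact hslope r hr
  have hΔ := mul_nonneg (hP.slope_nonneg i hi) (sub_nonneg.2 (hP.lt_succ i hi).le)
  have hend := potential_mono (by linarith [hvi.1]) hjv hvi'.2 (hβ.trans_le hcvi'.1) hjcv
    (by linarith [hcvi.2])
  linarith

theorem mul_sum_lt (hP : IsVolumeProfile β B N ρ v cv m) (hβ : 0 < β) {T : Finset ℕ}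
    (hT : T ⊆ Finset.range N) (hTne : T.Nonempty) {K : ℝ}
    (hslope : ∀ i ∈ T, ∀ r ∈ Set.Ico (ρ i) (ρ (i + 1)),
      K * (min (v r) (cv r) * logRatio B (min (v r) (cv r))) < m i) :
    K * ∑ i ∈ T, (ρ (i + 1) - ρ i) < 2 * Real.log (logRatio B β) := by
  set Ψ : ℕ → ℝ := fun i => potential B (v (ρ i)) (cv (ρ i))
  have hrange : ∀ u ∈ Set.Icc β B,
      0 ≤ Real.log (logRatio B u) ∧ Real.log (logRatio B u) ≤ Real.log (logRatio B β) :=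
    fun u hu => ⟨log_logRatio_nonneg (hβ.trans_le hu.1) hu.2, log_logRatio_anti hβ hu.1 hu.2⟩
  have htotal : Ψ N - Ψ 0 ≤ 2 * Real.log (logRatio B β) := by
    obtain ⟨hv0, hcv0⟩ := hP.mem_Icc 0 (Nat.zero_le N)
    obtain ⟨hvN, hcvN⟩ := hP.mem_Icc N le_rfl
    simp only [Ψ, potential]
    linarith [(hrange _ hcvN).2, (hrange _ hv0).2, (hrange _ hvN).1, (hrange _ hcv0).1]
  calc K * ∑ i ∈ T, (ρ (i + 1) - ρ i) = ∑ i ∈ T, K * (ρ (i + 1) - ρ i) := Finset.mul_sum _ _ _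
    _ < ∑ i ∈ T, (Ψ (i + 1) - Ψ i) := Finset.sum_lt_sum_of_nonempty hTne fun i hi =>
        hP.mul_sub_lt_potential_succ_sub hβ (Finset.mem_range.1 (hT hi)) (hslope i hi)
    _ ≤ ∑ i ∈ Finset.range N, (Ψ (i + 1) - Ψ i) :=
        Finset.sum_le_sum_of_subset_of_nonneg hT fun i hi _ =>
          sub_nonneg.2 (hP.potential_le_succ hβ (Finset.mem_range.1 hi))
    _ = Ψ N - Ψ 0 := Finset.sum_range_sub Ψ N
    _ ≤ 2 * Real.log (logRatio B β) := htotal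

/-- `f i`, `m i` and `h i` stand for `|∂|`, `|∂ ∩ F|` and `|∂ ∩ H|` on the `i`-th piece. -/
theorem exists_le_mul_logRatio (hP : IsVolumeProfile β B N ρ v cv m) (hβ : 0 < β)
    (hρ0 : ρ 0 = 0) (hρN : ρ N = 1) {γ κ L : ℝ} (hγ : 1 < γ) (hκ : 0 < κ)
    (hL : Real.log (logRatio B β) ≤ L) {f h : ℕ → ℝ} (hf : ∀ i < N, f i = m i + h i)
    (hfκ : ∀ i < N, γ * κ ≤ f i) (hh : ∀ i < N, 0 ≤ h i)
    (hH : ∑ i ∈ Finset.range N, h i * (ρ (i + 1) - ρ i) ≤ κ) :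
    ∃ i < N, ∃ r ∈ Set.Ico (ρ i) (ρ (i + 1)),
      f i ≤ 2 * γ / (Real.sqrt γ - 1) ^ 2 * v r * logRatio B (v r) * L ∧
      f i ≤ 2 * γ / (Real.sqrt γ - 1) ^ 2 * cv r * logRatio B (cv r) * L := by
  set σ := Real.sqrt γ
  have hσ1 : 1 < σ := Real.lt_sqrt_of_sq_lt (by linarith)
  have hσsq : σ ^ 2 = γ := Real.sq_sqrt (by linarith)
  have hσinv : 0 < 1 - σ⁻¹ := sub_pos.2 (inv_lt_one_of_one_lt₀ hσ1)
  set C := 2 * γ / (σ - 1) ^ 2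
  have hC : 0 ≤ C := div_nonneg (by linarith) (sq_nonneg _)
  have hL0 : 0 ≤ L := (log_logRatio_nonneg hβ ((hP.mem_Icc 0 (Nat.zero_le N)).1.1.trans
    (hP.mem_Icc 0 (Nat.zero_le N)).1.2)).trans hL
  by_contra! hfail
  set T := (Finset.range N).filter fun i => h i ≤ σ * κ
  have hΔ : ∀ i ∈ Finset.range N, 0 ≤ ρ (i + 1) - ρ i :=
    fun i hi => sub_nonneg.2 (hP.lt_succ i (Finset.mem_range.1 hi)).le
  have hTlen : 1 - σ⁻¹ ≤ ∑ i ∈ T, (ρ (i + 1) - ρ i) := by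
    have hsplit := Finset.sum_filter_add_sum_filter_not (Finset.range N)
      (fun i => h i ≤ σ * κ) (fun i => ρ (i + 1) - ρ i)
    simp only [not_le] at hsplit
    rw [Finset.sum_range_sub ρ N, hρ0, hρN] at hsplit
    have := sum_filter_lt_le_inv (σ := σ) hκ (by linarith) hΔ
      (fun i hi => hh i (Finset.mem_range.1 hi)) hH
    linarith
  have hslope : ∀ i ∈ T, ∀ r ∈ Set.Ico (ρ i) (ρ (i + 1)),
      (1 - σ⁻¹) * C * L * (min (v r) (cv r) * logRatio B (min (v r) (cv r))) < m i := by
    intro i hiT r hr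
    obtain ⟨hi, hhi⟩ := Finset.mem_filter.1 hiT
    rw [Finset.mem_range] at hi
    obtain ⟨hv, hcv⟩ := hP.mem_Icc_of_mem_Ico hi hr
    have hbdry := mul_min_mul_logRatio_lt hC hL0 (hβ.trans_le hv.1) hv.2 (hβ.trans_le hcv.1)
      hcv.2 (hfail i hi r hr)
    -- `h i ≤ σ κ ≤ f i / σ`, so the volume-carrying part is at least `(1 - 1/σ) f i`
    have hm : (1 - σ⁻¹) * f i ≤ m i := by
      have hσh : h i ≤ σ⁻¹ * f i := by
        rw [← div_eq_inv_mul, le_div_iff₀ (by linarith)]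
        nlinarith [hfκ i hi]
      linarith [hf i hi]
    calc (1 - σ⁻¹) * C * L * (min (v r) (cv r) * logRatio B (min (v r) (cv r)))
        = (1 - σ⁻¹) * (C * (min (v r) (cv r) * logRatio B (min (v r) (cv r))) * L) := by ring
      _ < (1 - σ⁻¹) * f i := mul_lt_mul_of_pos_left hbdry hσinv
      _ ≤ m i := hm
  have hTne : T.Nonempty := Finset.nonempty_of_sum_ne_zero (hσinv.trans_le hTlen).ne'
  have hsum := hP.mul_sum_lt hβ (Finset.filter_subset _ _) hTne hslope
  have hK : (1 - σ⁻¹) * C * L * (1 - σ⁻¹) = 2 * L := by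
    have hσ0 : σ ≠ 0 := by positivity
    have hσ1' : σ - 1 ≠ 0 := by linarith
    simp only [C, ← hσsq]
    field_simp
  have hK0 : 0 ≤ (1 - σ⁻¹) * C * L := by positivity
  nlinarith [mul_le_mul_of_nonneg_left hTlen hK0]

end IsVolumeProfile

/-- The length inside the ball of radius `ρ` of an edge of length `h` whose endpoints are at
distances `a ≤ b` from the centre. -/
noncomputable def rampUp (a b h ρ : ℝ) : ℝ := if b ≤ ρ then h else if a ≤ ρ then ρ - a else 0

/-- The length outside the ball of radius `ρ` of the same edge. -/
noncomputable def rampDown (a b h ρ : ℝ) : ℝ := if ρ < a then h else if ρ < b then b - ρ else 0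

section Ramp

variable {a b h p q r ρ : ℝ}

theorem rampUp_nonneg (hh : 0 ≤ h) : 0 ≤ rampUp a b h ρ := by
  unfold rampUp
  split_ifs <;> linarith

theorem rampDown_nonneg (hh : 0 ≤ h) : 0 ≤ rampDown a b h ρ := by
  unfold rampDown
  split_ifs <;> linarith

theorem rampUp_le (hh : 0 ≤ h) (hgap : a ≤ ρ → b ≤ a + h) : rampUp a b h ρ ≤ h := by
  unfold rampUp
  split_ifs with hb ha
  · exact le_rfl
  · linarith [hgap ha]
  · exact hh

theorem rampDown_le (hh : 0 ≤ h) (hgap : a ≤ ρ → b ≤ a + h) : rampDown a b h ρ ≤ h := by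
  unfold rampDown
  split_ifs with ha hb
  · exact le_rfl
  · linarith [hgap (not_lt.1 ha)]
  · exact hh

theorem rampUp_eq_on_piece (ha : a ≤ p ∨ q ≤ a) (hb : b ≤ p ∨ q ≤ b) (hr : r ∈ Set.Ico p q) :
    rampUp a b h r = rampUp a b h p + if a ≤ p ∧ p < b then r - p else 0 := by
  unfold rampUp
  rw [ite_and]
  rcases ha with ha | ha <;> rcases hb with hb | hb <;> split_ifs <;> linarith [hr.1, hr.2]

theorem rampDown_eq_on_piece (ha : a ≤ p ∨ q ≤ a) (hb : b ≤ p ∨ q ≤ b) (hr : r ∈ Set.Ico p q) :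
    rampDown a b h r = rampDown a b h p - if a ≤ p ∧ p < b then r - p else 0 := by
  unfold rampDown
  rw [ite_and]
  rcases ha with ha | ha <;> rcases hb with hb | hb <;> split_ifs <;> linarith [hr.1, hr.2]

theorem rampUp_add_le (hh : 0 ≤ h) (ha : a ≤ p ∨ q ≤ a) (hb : b ≤ p ∨ q ≤ b) (hpq : p ≤ q)
    (hgap : a ≤ p → b ≤ a + h) :
    rampUp a b h p + (if a ≤ p ∧ p < b then q - p else 0) ≤ rampUp a b h q := by
  unfold rampUp
  rw [ite_and]
  rcases ha with ha | ha
  · have := hgap ha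
    rcases hb with hb | hb <;> split_ifs <;> linarith
  · rcases hb with hb | hb <;> split_ifs <;> linarith

theorem rampDown_le_sub (hh : 0 ≤ h) (ha : a ≤ p ∨ q ≤ a) (hb : b ≤ p ∨ q ≤ b) (hpq : p ≤ q)
    (hgap : a ≤ q → b ≤ a + h) :
    rampDown a b h q ≤ rampDown a b h p - if a ≤ p ∧ p < b then q - p else 0 := by
  unfold rampDown
  rw [ite_and]
  rcases le_or_gt a q with haq | haq
  · have := hgap haq
    rcases ha with ha | ha <;> rcases hb with hb | hb <;> split_ifs <;> linarith
  · rcases ha with ha | ha <;> rcases hb with hb | hb <;> split_ifs <;> linarith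

end Ramp

section Sym2

variable (g : V → ℝ)

@[simp] theorem dmin_mk (u v : V) : dmin g s(u, v) = min (g u) (g v) := rfl

@[simp] theorem dmax_mk (u v : V) : dmax g s(u, v) = max (g u) (g v) := rfl

@[simp] theorem elen_mk (ℓ : V → V → ℝ) (u v : V) : elen ℓ s(u, v) = (ℓ u v + ℓ v u) / 2 := rfl

theorem exists_mem_eq_dmin (e : Sym2 V) : ∃ v ∈ e, g v = dmin g e := by
  induction e using Sym2.ind with
  | _ u v => rcases min_choice (g u) (g v) with h | h <;> simp [h]

theorem exists_mem_eq_dmax (e : Sym2 V) : ∃ v ∈ e, g v = dmax g e := by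
  induction e using Sym2.ind with
  | _ u v => rcases max_choice (g u) (g v) with h | h <;> simp [h]

variable {g}

theorem dmin_le_of_mem {e : Sym2 V} {v : V} (hv : v ∈ e) : dmin g e ≤ g v := by
  induction e using Sym2.ind with
  | _ u w => rcases Sym2.mem_iff.1 hv with rfl | rfl <;> simp

theorem le_dmax_of_mem {e : Sym2 V} {v : V} (hv : v ∈ e) : g v ≤ dmax g e := by
  induction e using Sym2.ind with
  | _ u w => rcases Sym2.mem_iff.1 hv with rfl | rfl <;> simp

theorem dmin_sep {p q : ℝ} (hsep : ∀ v, g v ≤ p ∨ q ≤ g v) (e : Sym2 V) :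
    dmin g e ≤ p ∨ q ≤ dmin g e := by
  obtain ⟨v, -, hv⟩ := exists_mem_eq_dmin g e
  exact hv ▸ hsep v

theorem dmax_sep {p q : ℝ} (hsep : ∀ v, g v ≤ p ∨ q ≤ g v) (e : Sym2 V) :
    dmax g e ≤ p ∨ q ≤ dmax g e := by
  obtain ⟨v, -, hv⟩ := exists_mem_eq_dmax g e
  exact hv ▸ hsep v

end Sym2

section Ball

variable {g : V → ℝ} {S : Finset V} {ρ : ℝ}

theorem mem_ball {v : V} : v ∈ ball g S ρ ↔ v ∈ S ∧ g v ≤ ρ := Finset.mem_filter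

theorem forall_mem_ball_iff {e : Sym2 V} :
    (∀ w ∈ e, w ∈ ball g S ρ) ↔ (∀ w ∈ e, w ∈ S) ∧ dmax g e ≤ ρ := by
  induction e using Sym2.ind with
  | _ u v =>
    simp only [Sym2.mem_iff, forall_eq_or_imp, forall_eq, mem_ball, dmax_mk, max_le_iff]
    tauto

theorem forall_mem_not_ball_iff {e : Sym2 V} :
    (∀ w ∈ e, w ∈ S ∧ w ∉ ball g S ρ) ↔ (∀ w ∈ e, w ∈ S) ∧ ρ < dmin g e := by
  induction e using Sym2.ind with
  | _ u v =>
    simp only [Sym2.mem_iff, forall_eq_or_imp, forall_eq, mem_ball, dmin_mk, lt_min_iff, not_and,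
      not_le]
    tauto

variable [Fintype V] [DecidableEq V] {G : SimpleGraph V} [DecidableRel G.Adj]

theorem mem_bdry {e : Sym2 V} : e ∈ bdry G g S ρ ↔
    e ∈ G.edgeFinset ∧ (∀ w ∈ e, w ∈ S) ∧ dmin g e ≤ ρ ∧ ρ < dmax g e :=
  Finset.mem_filter

theorem filter_cut_ball_eq_bdry :
    G.edgeFinset.filter (fun e => (∀ w ∈ e, w ∈ S) ∧
      (∃ u ∈ e, u ∈ ball g S ρ) ∧ (∃ v ∈ e, v ∉ ball g S ρ)) = bdry G g S ρ := by
  ext e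
  rw [Finset.mem_filter, mem_bdry]
  refine and_congr_right fun _ => and_congr_right fun hS => and_congr ⟨?_, ?_⟩ ⟨?_, ?_⟩
  · rintro ⟨u, hu, hball⟩
    exact (dmin_le_of_mem hu).trans (mem_ball.1 hball).2
  · obtain ⟨u, hu, hgu⟩ := exists_mem_eq_dmin g e
    exact fun h => ⟨u, hu, mem_ball.2 ⟨hS u hu, hgu ▸ h⟩⟩
  · rintro ⟨v, hv, hball⟩
    have : ρ < g v := not_le.1 fun h => hball (mem_ball.2 ⟨hS v hv, h⟩)
    exact this.trans_le (le_dmax_of_mem hv)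
  · obtain ⟨v, hv, hgv⟩ := exists_mem_eq_dmax g e
    exact fun h => ⟨v, hv, fun hball => (mem_ball.1 hball).2.not_gt (hgv ▸ h)⟩

theorem bdry_eq_of_sep {p q r : ℝ} (hsep : ∀ v, g v ≤ p ∨ q ≤ g v) (hr : r ∈ Set.Ico p q) :
    bdry G g S r = bdry G g S p := by
  ext e
  simp only [mem_bdry]
  have h1 := dmin_sep hsep e
  have h2 := dmax_sep hsep e
  constructor <;> rintro ⟨he, hS, hmin, hmax⟩ <;> refine ⟨he, hS, ?_, ?_⟩ <;>
    rcases h1 with h1 | h1 <;> rcases h2 with h2 | h2 <;> linarith [hr.1, hr.2]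

theorem sum_filter_ite_eq_sum_bdry_inter {A : Finset (Sym2 V)} (hA : A ⊆ G.edgeFinset)
    (f : Sym2 V → ℝ) :
    ∑ e ∈ A with (∀ w ∈ e, w ∈ S), (if dmin g e ≤ ρ ∧ ρ < dmax g e then f e else 0) =
      ∑ e ∈ bdry G g S ρ ∩ A, f e := by
  rw [Finset.sum_filter, Finset.inter_comm, ← Finset.sum_ite_mem]
  refine Finset.sum_congr rfl fun e he => ?_
  simp only [mem_bdry, hA he, true_and, ite_and]

end Ball

/-- `ℓ` is the shortest-path pseudometric of the edge lengths `w`, except that vertices in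
different components are only required to be at distance more than `1` (the largest radius ever
used). -/
structure IsWalkMetric (G : SimpleGraph V) (w : Sym2 V → ℝ) (ℓ : V → V → ℝ) : Prop where
  le_walk : ∀ u v (p : G.Walk u v), ℓ u v ≤ (p.edges.map w).sum
  exists_walk_eq : ∀ u v, G.Reachable u v → ∃ p : G.Walk u v, ℓ u v = (p.edges.map w).sum
  one_lt_of_not_reachable : ∀ u v, ¬ G.Reachable u v → 1 < ℓ u v

namespace IsWalkMetric

variable {G : SimpleGraph V} {w : Sym2 V → ℝ} {ℓ : V → V → ℝ}

theorem nonneg (hℓ : IsWalkMetric G w ℓ) (hw : ∀ e, 0 ≤ w e) (u v : V) : 0 ≤ ℓ u v := by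
  by_cases h : G.Reachable u v
  · obtain ⟨p, hp⟩ := hℓ.exists_walk_eq u v h
    exact hp ▸ List.sum_nonneg (by simpa using fun e _ => hw e)
  · linarith [hℓ.one_lt_of_not_reachable u v h]

theorem self_nonpos (hℓ : IsWalkMetric G w ℓ) (u : V) : ℓ u u ≤ 0 := by
  simpa using hℓ.le_walk u u .nil

theorem reachable_of_le_one (hℓ : IsWalkMetric G w ℓ) {u v : V} (h : ℓ u v ≤ 1) :
    G.Reachable u v :=
  by_contra fun hn => (hℓ.one_lt_of_not_reachable u v hn).not_ge h

theorem le_add_of_reachable (hℓ : IsWalkMetric G w ℓ) {z u v : V} (hzu : G.Reachable z u)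
    (huv : G.Reachable u v) : ℓ z v ≤ ℓ z u + ℓ u v := by
  obtain ⟨p, hp⟩ := hℓ.exists_walk_eq z u hzu
  obtain ⟨q, hq⟩ := hℓ.exists_walk_eq u v huv
  simpa [hp, hq] using hℓ.le_walk z v (p.append q)

theorem le_add_of_reachable' (hℓ : IsWalkMetric G w ℓ) {z u v : V} (hzu : G.Reachable z u)
    (hvu : G.Reachable v u) : ℓ z v ≤ ℓ z u + ℓ v u := by
  obtain ⟨p, hp⟩ := hℓ.exists_walk_eq z u hzu
  obtain ⟨q, hq⟩ := hℓ.exists_walk_eq v u hvu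
  simpa [hp, hq] using hℓ.le_walk z v (p.append q.reverse)

theorem elen_nonneg (hℓ : IsWalkMetric G w ℓ) (hw : ∀ e, 0 ≤ w e) (e : Sym2 V) :
    0 ≤ elen ℓ e := by
  induction e using Sym2.ind with
  | _ u v => simp only [elen_mk]; linarith [hℓ.nonneg hw u v, hℓ.nonneg hw v u]

variable [Fintype V] [DecidableRel G.Adj]

theorem elen_le (hℓ : IsWalkMetric G w ℓ) {e : Sym2 V} (he : e ∈ G.edgeFinset) :
    elen ℓ e ≤ w e := by
  induction e using Sym2.ind with
  | _ u v =>
    have hadj : G.Adj u v := SimpleGraph.mem_edgeFinset.1 he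
    have huv := hℓ.le_walk u v hadj.toWalk
    have hvu := hℓ.le_walk v u hadj.symm.toWalk
    simp only [SimpleGraph.Walk.edges_cons, SimpleGraph.Walk.edges_nil, List.map_cons,
      List.map_nil, List.sum_cons, List.sum_nil, add_zero, Sym2.eq_swap (a := v)] at huv hvu
    simp only [elen_mk]
    linarith

theorem dmax_le_dmin_add_elen (hℓ : IsWalkMetric G w ℓ) {z : V} {e : Sym2 V}
    (he : e ∈ G.edgeFinset) (h : dmin (ℓ z) e ≤ 1) : dmax (ℓ z) e ≤ dmin (ℓ z) e + elen ℓ e := by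
  induction e using Sym2.ind with
  | _ u v =>
    have hadj : G.Adj u v := SimpleGraph.mem_edgeFinset.1 he
    -- `ℓ z a ≤ 1` puts `a` in the component of `z`, where the triangle inequality holds
    have hcross : ∀ {a b : V}, G.Adj a b → ℓ z a ≤ 1 → ℓ z b ≤ ℓ z a + (ℓ a b + ℓ b a) / 2 :=
      fun {a b} hab ha => by
        have hza := hℓ.reachable_of_le_one ha
        linarith [hℓ.le_add_of_reachable hza hab.reachable,
          hℓ.le_add_of_reachable' hza hab.symm.reachable]
    simp only [dmin_mk, dmax_mk, elen_mk] at h ⊢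
    rcases le_total (ℓ z u) (ℓ z v) with huv | hvu
    · rw [min_eq_left huv] at h ⊢
      rw [max_eq_right huv]
      exact hcross hadj h
    · rw [min_eq_right hvu] at h ⊢
      rw [max_eq_left hvu, add_comm (ℓ u v)]
      exact hcross hadj.symm h

end IsWalkMetric

/-- `Σ_{e ∈ A ∩ E(S)} c_e · |e ∩ B(z, ρ)|`, the edges being segments of length `elen ℓ e`. -/
noncomputable def innerLength [Fintype V] [DecidableEq V] (c : Sym2 V → ℝ) (ℓ : V → V → ℝ)
    (A : Finset (Sym2 V)) (S : Finset V) (z : V) (ρ : ℝ) : ℝ :=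
  ∑ e ∈ A with (∀ w ∈ e, w ∈ S), c e * rampUp (dmin (ℓ z) e) (dmax (ℓ z) e) (elen ℓ e) ρ

/-- The same for the complement of the ball. -/
noncomputable def outerLength [Fintype V] [DecidableEq V] (c : Sym2 V → ℝ) (ℓ : V → V → ℝ)
    (A : Finset (Sym2 V)) (S : Finset V) (z : V) (ρ : ℝ) : ℝ :=
  ∑ e ∈ A with (∀ w ∈ e, w ∈ S), c e * rampDown (dmin (ℓ z) e) (dmax (ℓ z) e) (elen ℓ e) ρ

section Length

variable [Fintype V] [DecidableEq V] {G : SimpleGraph V} {c w : Sym2 V → ℝ} {ℓ : V → V → ℝ}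
  {A F : Finset (Sym2 V)} {S : Finset V} {z : V} {β ρ p q r : ℝ}

theorem innerLength_nonneg (hℓ : IsWalkMetric G w ℓ) (hw : ∀ e, 0 ≤ w e) (hc : ∀ e, 0 ≤ c e) :
    0 ≤ innerLength c ℓ A S z ρ :=
  Finset.sum_nonneg fun e _ => mul_nonneg (hc e) (rampUp_nonneg (hℓ.elen_nonneg hw e))

theorem outerLength_nonneg (hℓ : IsWalkMetric G w ℓ) (hw : ∀ e, 0 ≤ w e) (hc : ∀ e, 0 ≤ c e) :
    0 ≤ outerLength c ℓ A S z ρ :=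
  Finset.sum_nonneg fun e _ => mul_nonneg (hc e) (rampDown_nonneg (hℓ.elen_nonneg hw e))

variable [DecidableRel G.Adj]

theorem vol_eq (hFE : F ⊆ G.edgeFinset) :
    vol G c ℓ F S z β ρ = β + innerLength c ℓ F S z ρ := by
  have hin : ∑ e ∈ F with (∀ w ∈ e, w ∈ ball (ℓ z) S ρ), c e * elen ℓ e =
      ∑ e ∈ F with (∀ w ∈ e, w ∈ S), (if dmax (ℓ z) e ≤ ρ then c e * elen ℓ e else 0) := by
    rw [← Finset.sum_filter, Finset.filter_filter]
    simp only [forall_mem_ball_iff]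
  rw [vol, innerLength, hin, ← sum_filter_ite_eq_sum_bdry_inter hFE, add_assoc,
    ← Finset.sum_add_distrib]
  refine congrArg _ (Finset.sum_congr rfl fun e _ => ?_)
  unfold rampUp
  rw [ite_and]
  split_ifs <;> first | ring1 | linarith

theorem cvol_eq (hFE : F ⊆ G.edgeFinset) :
    cvol G c ℓ F S z β ρ = β + outerLength c ℓ F S z ρ := by
  have hout : ∑ e ∈ F with (∀ w ∈ e, w ∈ S ∧ w ∉ ball (ℓ z) S ρ), c e * elen ℓ e =
      ∑ e ∈ F with (∀ w ∈ e, w ∈ S), (if ρ < dmin (ℓ z) e then c e * elen ℓ e else 0) := by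
    rw [← Finset.sum_filter, Finset.filter_filter]
    simp only [forall_mem_not_ball_iff]
  rw [cvol, outerLength, hout, ← sum_filter_ite_eq_sum_bdry_inter hFE, add_assoc,
    ← Finset.sum_add_distrib]
  refine congrArg _ (Finset.sum_congr rfl fun e _ => ?_)
  unfold rampDown
  rw [ite_and]
  split_ifs <;> first | ring1 | linarith

theorem innerLength_le (hℓ : IsWalkMetric G w ℓ) (hw : ∀ e, 0 ≤ w e) (hc : ∀ e, 0 ≤ c e)
    (hA : A ⊆ G.edgeFinset) (hρ : ρ ≤ 1) :
    innerLength c ℓ A S z ρ ≤ ∑ e ∈ A with (∀ w ∈ e, w ∈ S), c e * elen ℓ e :=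
  Finset.sum_le_sum fun e he => mul_le_mul_of_nonneg_left (rampUp_le (hℓ.elen_nonneg hw e)
    fun h => hℓ.dmax_le_dmin_add_elen (hA (Finset.mem_filter.1 he).1) (h.trans hρ)) (hc e)

theorem outerLength_le (hℓ : IsWalkMetric G w ℓ) (hw : ∀ e, 0 ≤ w e) (hc : ∀ e, 0 ≤ c e)
    (hA : A ⊆ G.edgeFinset) (hρ : ρ ≤ 1) :
    outerLength c ℓ A S z ρ ≤ ∑ e ∈ A with (∀ w ∈ e, w ∈ S), c e * elen ℓ e :=
  Finset.sum_le_sum fun e he => mul_le_mul_of_nonneg_left (rampDown_le (hℓ.elen_nonneg hw e)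
    fun h => hℓ.dmax_le_dmin_add_elen (hA (Finset.mem_filter.1 he).1) (h.trans hρ)) (hc e)

theorem innerLength_eq_on_piece (hA : A ⊆ G.edgeFinset) (hsep : ∀ v, ℓ z v ≤ p ∨ q ≤ ℓ z v)
    (hr : r ∈ Set.Ico p q) :
    innerLength c ℓ A S z r =
      innerLength c ℓ A S z p + (∑ e ∈ bdry G (ℓ z) S p ∩ A, c e) * (r - p) := by
  rw [innerLength, innerLength, Finset.sum_mul,
    ← sum_filter_ite_eq_sum_bdry_inter hA fun e => c e * (r - p), ← Finset.sum_add_distrib]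
  refine Finset.sum_congr rfl fun e _ => ?_
  rw [rampUp_eq_on_piece (dmin_sep hsep e) (dmax_sep hsep e) hr]
  split_ifs <;> ring

theorem outerLength_eq_on_piece (hA : A ⊆ G.edgeFinset) (hsep : ∀ v, ℓ z v ≤ p ∨ q ≤ ℓ z v)
    (hr : r ∈ Set.Ico p q) :
    outerLength c ℓ A S z r =
      outerLength c ℓ A S z p - (∑ e ∈ bdry G (ℓ z) S p ∩ A, c e) * (r - p) := by
  rw [outerLength, outerLength, Finset.sum_mul,
    ← sum_filter_ite_eq_sum_bdry_inter hA fun e => c e * (r - p), ← Finset.sum_sub_distrib]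
  refine Finset.sum_congr rfl fun e _ => ?_
  rw [rampDown_eq_on_piece (dmin_sep hsep e) (dmax_sep hsep e) hr]
  split_ifs <;> ring

theorem innerLength_add_le (hℓ : IsWalkMetric G w ℓ) (hw : ∀ e, 0 ≤ w e) (hc : ∀ e, 0 ≤ c e)
    (hA : A ⊆ G.edgeFinset) (hsep : ∀ v, ℓ z v ≤ p ∨ q ≤ ℓ z v) (hpq : p ≤ q) (hq : q ≤ 1) :
    innerLength c ℓ A S z p + (∑ e ∈ bdry G (ℓ z) S p ∩ A, c e) * (q - p) ≤
      innerLength c ℓ A S z q := by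
  rw [innerLength, innerLength, Finset.sum_mul,
    ← sum_filter_ite_eq_sum_bdry_inter hA fun e => c e * (q - p), ← Finset.sum_add_distrib]
  refine Finset.sum_le_sum fun e he => ?_
  have := rampUp_add_le (hℓ.elen_nonneg hw e) (dmin_sep hsep e) (dmax_sep hsep e) hpq
    fun h => hℓ.dmax_le_dmin_add_elen (hA (Finset.mem_filter.1 he).1) (h.trans (hpq.trans hq))
  rw [← mul_ite_zero, ← mul_add]
  exact mul_le_mul_of_nonneg_left this (hc e)

theorem outerLength_le_sub (hℓ : IsWalkMetric G w ℓ) (hw : ∀ e, 0 ≤ w e) (hc : ∀ e, 0 ≤ c e)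
    (hA : A ⊆ G.edgeFinset) (hsep : ∀ v, ℓ z v ≤ p ∨ q ≤ ℓ z v) (hpq : p ≤ q) (hq : q ≤ 1) :
    outerLength c ℓ A S z q ≤
      outerLength c ℓ A S z p - (∑ e ∈ bdry G (ℓ z) S p ∩ A, c e) * (q - p) := by
  rw [outerLength, outerLength, Finset.sum_mul,
    ← sum_filter_ite_eq_sum_bdry_inter hA fun e => c e * (q - p), ← Finset.sum_sub_distrib]
  refine Finset.sum_le_sum fun e he => ?_
  have := rampDown_le_sub (hℓ.elen_nonneg hw e) (dmin_sep hsep e) (dmax_sep hsep e) hpq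
    fun h => hℓ.dmax_le_dmin_add_elen (hA (Finset.mem_filter.1 he).1) (h.trans hq)
  rw [← mul_ite_zero, ← mul_sub]
  exact mul_le_mul_of_nonneg_left this (hc e)

end Length

section Profile

variable [Fintype V] [DecidableEq V] {G : SimpleGraph V} [DecidableRel G.Adj]
  {c w x : Sym2 V → ℝ} {ℓ : V → V → ℝ} {A F : Finset (Sym2 V)} {S : Finset V} {z : V} {β : ℝ}

theorem add_sum_elen_le_Vx (hc : ∀ e, 0 ≤ c e) (hx : ∀ e, 0 ≤ x e) (hFE : F ⊆ G.edgeFinset)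
    (hFx : ∀ e ∈ F, elen ℓ e ≤ x e) :
    β + ∑ e ∈ F with (∀ w ∈ e, w ∈ S), c e * elen ℓ e ≤ Vx G c x S β := by
  have hsum := calc ∑ e ∈ F with (∀ w ∈ e, w ∈ S), c e * elen ℓ e
      ≤ ∑ e ∈ F with (∀ w ∈ e, w ∈ S), c e * x e := Finset.sum_le_sum fun e he =>
        mul_le_mul_of_nonneg_left (hFx e (Finset.mem_filter.1 he).1) (hc e)
    _ ≤ ∑ e ∈ G.edgeFinset with (∀ w ∈ e, w ∈ S), c e * x e :=
        Finset.sum_le_sum_of_subset_of_nonneg (Finset.filter_subset_filter _ hFE)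
          fun e _ _ => mul_nonneg (hc e) (hx e)
  rw [Vx]
  linarith

theorem isVolumeProfile_vol (hℓ : IsWalkMetric G w ℓ) (hw : ∀ e, 0 ≤ w e) (hc : ∀ e, 0 ≤ c e)
    (hx : ∀ e, 0 ≤ x e) (hFE : F ⊆ G.edgeFinset) (hFx : ∀ e ∈ F, w e ≤ x e)
    {N : ℕ} {ρ : ℕ → ℝ} (hρ : ∀ i < N, ρ i < ρ (i + 1)) (hρ1 : ∀ i ≤ N, ρ i ≤ 1)
    (hsep : ∀ i < N, ∀ v, ℓ z v ≤ ρ i ∨ ρ (i + 1) ≤ ℓ z v) :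
    IsVolumeProfile β (Vx G c x S β) N ρ (vol G c ℓ F S z β) (cvol G c ℓ F S z β)
      fun i => ∑ e ∈ bdry G (ℓ z) S (ρ i) ∩ F, c e where
  lt_succ := hρ
  slope_nonneg _ _ := Finset.sum_nonneg fun e _ => hc e
  mem_Icc i hi := by
    have hB := add_sum_elen_le_Vx (S := S) (β := β) hc hx hFE
      fun e he => (hℓ.elen_le (hFE he)).trans (hFx e he)
    have hin := innerLength_le (S := S) (z := z) hℓ hw hc hFE (hρ1 i hi)
    have hout := outerLength_le (S := S) (z := z) hℓ hw hc hFE (hρ1 i hi)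
    have hin0 := innerLength_nonneg (A := F) (S := S) (z := z) (ρ := ρ i) hℓ hw hc
    have hout0 := outerLength_nonneg (A := F) (S := S) (z := z) (ρ := ρ i) hℓ hw hc
    rw [vol_eq hFE, cvol_eq hFE]
    exact ⟨⟨by linarith, by linarith⟩, ⟨by linarith, by linarith⟩⟩
  eq_on_piece i hi r hr := by
    rw [vol_eq hFE, cvol_eq hFE, vol_eq hFE, cvol_eq hFE,
      innerLength_eq_on_piece hFE (hsep i hi) hr, outerLength_eq_on_piece hFE (hsep i hi) hr]
    constructor <;> ring
  add_le i hi := by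
    rw [vol_eq hFE, cvol_eq hFE, vol_eq hFE, cvol_eq hFE]
    have hin := innerLength_add_le (S := S) hℓ hw hc hFE (hsep i hi) (hρ i hi).le (hρ1 _ hi)
    have hout := outerLength_le_sub (S := S) hℓ hw hc hFE (hsep i hi) (hρ i hi).le (hρ1 _ hi)
    constructor <;> linarith

/-- An edge lies on the boundary only while the sphere sweeps across it. -/
theorem sum_bdry_inter_mul_le (hℓ : IsWalkMetric G w ℓ) (hw : ∀ e, 0 ≤ w e)
    (hc : ∀ e, 0 ≤ c e) (hA : A ⊆ G.edgeFinset) {N : ℕ} {ρ : ℕ → ℝ}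
    (hρ : ∀ i < N, ρ i ≤ ρ (i + 1)) (hρ1 : ∀ i ≤ N, ρ i ≤ 1)
    (hsep : ∀ i < N, ∀ v, ℓ z v ≤ ρ i ∨ ρ (i + 1) ≤ ℓ z v) :
    ∑ i ∈ Finset.range N, (∑ e ∈ bdry G (ℓ z) S (ρ i) ∩ A, c e) * (ρ (i + 1) - ρ i) ≤
      ∑ e ∈ A, c e * w e := calc
  _ ≤ ∑ i ∈ Finset.range N,
        (innerLength c ℓ A S z (ρ (i + 1)) - innerLength c ℓ A S z (ρ i)) :=
      Finset.sum_le_sum fun i hi => by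
        rw [Finset.mem_range] at hi
        linarith [innerLength_add_le (S := S) hℓ hw hc hA (hsep i hi) (hρ i hi) (hρ1 _ hi)]
  _ = innerLength c ℓ A S z (ρ N) - innerLength c ℓ A S z (ρ 0) :=
      Finset.sum_range_sub (fun i => innerLength c ℓ A S z (ρ i)) N
  _ ≤ ∑ e ∈ A with (∀ w ∈ e, w ∈ S), c e * elen ℓ e := by
      linarith [innerLength_le (S := S) (z := z) hℓ hw hc hA (hρ1 N le_rfl),
        innerLength_nonneg (A := A) (S := S) (z := z) (ρ := ρ 0) hℓ hw hc]
  _ ≤ ∑ e ∈ A with (∀ w ∈ e, w ∈ S), c e * w e := Finset.sum_le_sum fun e he =>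
      mul_le_mul_of_nonneg_left (hℓ.elen_le (hA (Finset.mem_filter.1 he).1)) (hc e)
  _ ≤ ∑ e ∈ A, c e * w e := Finset.sum_le_sum_of_subset_of_nonneg (Finset.filter_subset _ _)
      fun e _ _ => mul_nonneg (hc e) (hw e)

end Profile

section Cut

variable [Fintype V] [DecidableEq V] {G : SimpleGraph V} [DecidableRel G.Adj] {S : Finset V}
  {ρ : ℝ}

theorem le_card_bdry {g : V → ℝ} {M : ℝ} {s t : V}
    (hcut : ∀ A : Finset V, A ⊆ S → s ∈ A → t ∉ A →
      M ≤ ((G.edgeFinset.filter (fun e =>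
        (∀ w ∈ e, w ∈ S) ∧ (∃ u ∈ e, u ∈ A) ∧ (∃ v ∈ e, v ∉ A))).card : ℝ))
    (hs : s ∈ S) (hsρ : g s ≤ ρ) (hρt : ρ < g t) : M ≤ ((bdry G g S ρ).card : ℝ) := by
  have := hcut (ball g S ρ) (Finset.filter_subset _ _) (mem_ball.2 ⟨hs, hsρ⟩)
    fun h => (mem_ball.1 h).2.not_gt hρt
  rwa [filter_cut_ball_eq_bdry] at this

/-- Only edges of positive length cross the sphere of a radius `ρ ≤ 1`. -/
theorem card_bdry_eq_add {x y : Sym2 V → ℝ} {ℓ : V → V → ℝ} {F H : Finset (Sym2 V)} {z : V}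
    (hℓ : IsWalkMetric G (fun e => x e + y e) ℓ) (hxF : ∀ e ∉ F, x e = 0)
    (hyH : ∀ e ∉ H, y e = 0) (hFH : Disjoint F H) (hρ : ρ ≤ 1) :
    (bdry G (ℓ z) S ρ).card = (bdry G (ℓ z) S ρ ∩ F).card + (bdry G (ℓ z) S ρ ∩ H).card := by
  have hsub : bdry G (ℓ z) S ρ ⊆ F ∪ H := by
    intro e he
    obtain ⟨hE, -, hmin, hmax⟩ := mem_bdry.1 he
    by_contra hFH'
    rw [Finset.mem_union, not_or] at hFH'
    have hgap := hℓ.dmax_le_dmin_add_elen hE (hmin.trans hρ)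
    have hlen := hℓ.elen_le hE
    simp only [hxF e hFH'.1, hyH e hFH'.2, add_zero] at hlen
    linarith
  rw [← Finset.card_union_of_disjoint (hFH.mono Finset.inter_subset_right
    Finset.inter_subset_right), ← Finset.inter_union_distrib_left, Finset.inter_eq_left.2 hsub]

end Cut

theorem Vx_le_mul [Fintype V] [DecidableEq V] {G : SimpleGraph V} [DecidableRel G.Adj]
    {c x : Sym2 V → ℝ} {S : Finset V} {β : ℝ} {r : ℕ} (hcx : ∀ e, 0 ≤ c e * x e)
    (hβ : β = (∑ e ∈ G.edgeFinset, c e * x e) / r) (hr : 1 ≤ r) :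
    Vx G c x S β ≤ (r + 1) * β := by
  have hsum : ∑ e ∈ G.edgeFinset, c e * x e = r * β := by
    rw [hβ, mul_div_cancel₀ _ (Nat.cast_ne_zero.2 (by omega))]
  have := Finset.sum_le_sum_of_subset_of_nonneg (Finset.filter_subset
    (fun e => ∀ w ∈ e, w ∈ S) G.edgeFinset) fun e _ _ => hcx e
  rw [Vx]
  linarith

theorem stmt_9_general [Fintype V] [DecidableEq V] (G : SimpleGraph V) [DecidableRel G.Adj]
    (c x y : Sym2 V → ℝ) (F H : Finset (Sym2 V))
    (hc : ∀ e, c e = 1) (hx : ∀ e, 0 ≤ x e) (hy : ∀ e, 0 ≤ y e)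
    (hFE : F ⊆ G.edgeFinset) (hHE : H ⊆ G.edgeFinset) (hFH : Disjoint F H)
    (hxF : ∀ e ∉ F, x e = 0) (hyH : ∀ e ∉ H, y e = 0)
    (k r : ℕ) (hk : 2 ≤ k) (hr : 1 ≤ r)
    (hysum : ∑ e ∈ G.edgeFinset, y e ≤ (k : ℝ) - 1)
    (ℓ : V → V → ℝ)
    (hle : ∀ u v, ∀ p : G.Walk u v, ℓ u v ≤ (p.edges.map fun e => x e + y e).sum)
    (hattain : ∀ u v, G.Reachable u v →
      ∃ p : G.Walk u v, ℓ u v = (p.edges.map fun e => x e + y e).sum)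
    (hfar : ∀ u v, ¬ G.Reachable u v → 1 < ℓ u v)
    (β : ℝ) (hβ : β = (∑ e ∈ G.edgeFinset, c e * x e) / r) (hβpos : 0 < β)
    (S : Finset V) (γ : ℝ) (hγ : 1 < γ)
    (s t : V) (hs : s ∈ S) (hst : 1 ≤ ℓ s t)
    (hcut : ∀ A : Finset V, A ⊆ S → s ∈ A → t ∉ A →
      γ * ((k : ℝ) - 1) ≤
        ((G.edgeFinset.filter (fun e =>
          (∀ w ∈ e, w ∈ S) ∧ (∃ u ∈ e, u ∈ A) ∧ (∃ v ∈ e, v ∉ A))).card : ℝ)) :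
    ∃ ρ₁ ∈ Set.Ico (0 : ℝ) 1,
      (((bdry G (ℓ s) S ρ₁).card : ℝ) ≤
        2 * γ / (Real.sqrt γ - 1) ^ 2 * vol G c ℓ F S s β ρ₁ *
          Real.log (Real.exp 1 * Vx G c x S β / vol G c ℓ F S s β ρ₁) *
          Real.log (Real.log (Real.exp 1 * (r + 1)))) ∧
      (((bdry G (ℓ s) S ρ₁).card : ℝ) ≤
        2 * γ / (Real.sqrt γ - 1) ^ 2 * cvol G c ℓ F S s β ρ₁ *
          Real.log (Real.exp 1 * Vx G c x S β / cvol G c ℓ F S s β ρ₁) *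
          Real.log (Real.log (Real.exp 1 * (r + 1)))) := by
  have hℓ : IsWalkMetric G (fun e => x e + y e) ℓ := ⟨hle, hattain, hfar⟩
  have hw : ∀ e, 0 ≤ x e + y e := fun e => add_nonneg (hx e) (hy e)
  have hc0 : ∀ e, 0 ≤ c e := fun e => (hc e).symm ▸ zero_le_one
  obtain ⟨N, ρ, hρ0, hρN, hρlt, hρ01, hsep⟩ :=
    exists_partition_separating (Finset.univ.image (ℓ s))
  replace hsep : ∀ i < N, ∀ v, ℓ s v ≤ ρ i ∨ ρ (i + 1) ≤ ℓ s v :=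
    fun i hi v => hsep i hi _ (Finset.mem_image_of_mem _ (Finset.mem_univ v))
  have hρ1 : ∀ i ≤ N, ρ i ≤ 1 := fun i hi => (hρ01 i hi).2
  have hP := isVolumeProfile_vol (S := S) (β := β) hℓ hw hc0 hx hFE
    (fun e he => by simp [hyH e (Finset.disjoint_left.1 hFH he)]) hρlt hρ1 hsep
  have hH := sum_bdry_inter_mul_le (S := S) hℓ hw hc0 hHE (fun i hi => (hρlt i hi).le) hρ1 hsep
  simp only [hc, one_mul, Finset.sum_const, nsmul_eq_mul, mul_one] at hP hH
  have hHy : ∑ e ∈ H, (x e + y e) ≤ (k : ℝ) - 1 := calc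
    _ = ∑ e ∈ H, y e := Finset.sum_congr rfl fun e he => by
        rw [hxF e (Finset.disjoint_right.1 hFH he), zero_add]
    _ ≤ _ := (Finset.sum_le_sum_of_subset_of_nonneg hHE fun e _ _ => hy e).trans hysum
  have hB := (hP.mem_Icc 0 (Nat.zero_le N)).1
  have hL := log_logRatio_le hβpos (hB.1.trans hB.2)
    (Vx_le_mul (fun e => mul_nonneg (hc0 e) (hx e)) hβ hr)
  have hcard : ∀ i < N, γ * ((k : ℝ) - 1) ≤ (bdry G (ℓ s) S (ρ i)).card := fun i hi =>
    le_card_bdry hcut hs ((hℓ.self_nonpos s).trans (hρ01 i hi.le).1)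
      (((hρlt i hi).trans_le (hρ1 _ hi)).trans_le hst)
  obtain ⟨i, hi, ρ₁, hρ₁, hvol, hcvol⟩ := hP.exists_le_mul_logRatio hβpos hρ0 hρN hγ
    (by linarith [(Nat.ofNat_le_cast.2 hk : (2 : ℝ) ≤ k)]) hL
    (f := fun i => (bdry G (ℓ s) S (ρ i)).card) (h := fun i => (bdry G (ℓ s) S (ρ i) ∩ H).card)
    (fun i hi => by exact_mod_cast card_bdry_eq_add hℓ hxF hyH hFH (hρ1 i hi.le)) hcard
    (fun _ _ => Nat.cast_nonneg _) (hH.trans hHy)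
  refine ⟨ρ₁, ⟨(hρ01 i hi.le).1.trans hρ₁.1, hρ₁.2.trans_le (hρ1 _ hi)⟩, ?_⟩
  rw [bdry_eq_of_sep (hsep i hi) hρ₁]
  exact ⟨hvol, hcvol⟩

/-- Region growing with a connectivity lower bound (unit costs): in
the subdivided LP setup with unit edge costs, if `s, t ∈ S` are at distance `ℓ(s,t) ≥ 1`
and every `s`–`t` cut internal to `S` has at least `γ(k-1)` edges (`γ > 1`), then there
is `ρ₁ ∈ [0,1)` such that `|∂(ρ₁)|` satisfies both volume bounds with the constant
`2γ/(√γ - 1)²`, the balls being grown around `z = s`. -/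
theorem stmt_9 [Fintype V] [DecidableEq V] (G : SimpleGraph V) [DecidableRel G.Adj]
    (c x y : Sym2 V → ℝ) (F H : Finset (Sym2 V))
    (hc : ∀ e, c e = 1) (hx : ∀ e, 0 ≤ x e) (hy : ∀ e, 0 ≤ y e)
    (hFE : F ⊆ G.edgeFinset) (hHE : H ⊆ G.edgeFinset) (hFH : Disjoint F H)
    (hxF : ∀ e ∉ F, x e = 0) (hyH : ∀ e ∉ H, y e = 0)
    (k r : ℕ) (hk : 2 ≤ k) (hr : 1 ≤ r)
    (hysum : ∑ e ∈ G.edgeFinset, y e ≤ (k : ℝ) - 1)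
    (ℓ : V → V → ℝ)
    (hle : ∀ u v, ∀ p : G.Walk u v, ℓ u v ≤ (p.edges.map fun e => x e + y e).sum)
    (hattain : ∀ u v, G.Reachable u v →
      ∃ p : G.Walk u v, ℓ u v = (p.edges.map fun e => x e + y e).sum)
    (hfar : ∀ u v, ¬ G.Reachable u v → 1 < ℓ u v)
    (β : ℝ) (hβ : β = (∑ e ∈ G.edgeFinset, c e * x e) / r) (hβpos : 0 < β)
    (S : Finset V) (γ : ℝ) (hγ : 1 < γ)
    (s t : V) (hs : s ∈ S) (ht : t ∈ S) (hst : 1 ≤ ℓ s t)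
    (hcut : ∀ A : Finset V, A ⊆ S → s ∈ A → t ∉ A →
      γ * ((k : ℝ) - 1) ≤
        ((G.edgeFinset.filter (fun e =>
          (∀ w ∈ e, w ∈ S) ∧ (∃ u ∈ e, u ∈ A) ∧ (∃ v ∈ e, v ∉ A))).card : ℝ)) :
    ∃ ρ₁ ∈ Set.Ico (0 : ℝ) 1,
      (((bdry G (ℓ s) S ρ₁).card : ℝ) ≤
        2 * γ / (Real.sqrt γ - 1) ^ 2 * vol G c ℓ F S s β ρ₁ *
          Real.log (Real.exp 1 * Vx G c x S β / vol G c ℓ F S s β ρ₁) *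
          Real.log (Real.log (Real.exp 1 * (r + 1)))) ∧
      (((bdry G (ℓ s) S ρ₁).card : ℝ) ≤
        2 * γ / (Real.sqrt γ - 1) ^ 2 * cvol G c ℓ F S s β ρ₁ *
          Real.log (Real.exp 1 * Vx G c x S β / cvol G c ℓ F S s β ρ₁) *
          Real.log (Real.log (Real.exp 1 * (r + 1)))) :=
  stmt_9_general G c x y F H hc hx hy hFE hHE hFH hxF hyH k r hk hr hysum ℓ hle hattain hfar β hβ
    hβpos S γ hγ s t hs hst hcut

end SubdividedLP
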